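/- Let A be a locally finite hyperplane arrangement in ℝⁿ and x₀ a point generic with respect to A. Then x₀ is generic with respect to every subarrangement A' ⊆ A. -/

import Mathlib

open Metric Set MeasureTheory

noncomputable section

/-- A locally finite arrangement of affine hyperplanes in ℝⁿ, given by affine
equations `⟪a i, x⟫ = b i` with `a i ≠ 0`, indexed injectively by `ι`. -/
structure Arrangement (n : ℕ) (ι : Type) where
  a : ι → EuclideanSpace ℝ (Fin n)
  b : ι → ℝ
  ha : ∀ i, a i ≠ 0
  inj : Function.Injective fun i => {x : EuclideanSpace ℝ (Fin n) | (inner ℝ (a i) x : ℝ) = b i}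
  locFin : ∀ x : EuclideanSpace ℝ (Fin n), ∃ ε > 0,
    {i : ι | ∃ y ∈ Metric.ball x ε, (inner ℝ (a i) y : ℝ) = b i}.Finite

namespace Arrangement

variable {n : ℕ} {ι : Type} (A : Arrangement n ι)

/-- The defining affine functional of the `i`-th hyperplane. -/
def val (i : ι) (x : EuclideanSpace ℝ (Fin n)) : ℝ := (inner ℝ (A.a i) x : ℝ) - A.b i

/-- The `i`-th hyperplane. -/
def hyperplane (i : ι) : Set (EuclideanSpace ℝ (Fin n)) := {x | A.val i x = 0}

/-- The sign vector of a point. -/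
def signAt (x : EuclideanSpace ℝ (Fin n)) : ι → SignType := fun i => SignType.sign (A.val i x)

/-- The (relatively open) stratum with sign vector `σ`. -/
def openCell (σ : ι → SignType) : Set (EuclideanSpace ℝ (Fin n)) :=
  {x | ∀ i, SignType.sign (A.val i x) = σ i}

/-- The (closed) faces of the arrangement: closures of the strata. -/
def IsFace (F : Set (EuclideanSpace ℝ (Fin n))) : Prop :=
  ∃ x : EuclideanSpace ℝ (Fin n), F = closure (A.openCell (A.signAt x))

/-- Chambers: closed faces of codimension 0. -/
def IsChamber (C : Set (EuclideanSpace ℝ (Fin n))) : Prop :=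
  ∃ x : EuclideanSpace ℝ (Fin n), (∀ i, A.val i x ≠ 0) ∧
    C = closure (A.openCell (A.signAt x))

/-- The support of a subset: the hyperplanes containing it. -/
def supp (U : Set (EuclideanSpace ℝ (Fin n))) : Set ι := {i | U ⊆ A.hyperplane i}

/-- The set of hyperplanes separating two chambers. -/
def sep (C C' : Set (EuclideanSpace ℝ (Fin n))) : Set ι :=
  {i | ∀ x ∈ interior C, ∀ y ∈ interior C', A.val i x * A.val i y < 0}

/-- `F` is a face of the chamber (or face) `C`. -/
def IsFaceOf (F C : Set (EuclideanSpace ℝ (Fin n))) : Prop := A.IsFace F ∧ F ⊆ C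

/-- `A.IsCF C F D` means `D = C.F`: `D` is the unique chamber containing `F` and not
separated from `C` by any hyperplane of `supp F`. -/
def IsCF (C F D : Set (EuclideanSpace ℝ (Fin n))) : Prop :=
  A.IsChamber D ∧ F ⊆ D ∧ A.sep C D ∩ A.supp F = ∅

/-- `A.IsOpp D F E` means `E = D^F`: `E` is the chamber opposite to `D` with respect to
its face `F`, i.e. the hyperplanes separating `D` and `E` are exactly those containing `F`. -/
def IsOpp (D F E : Set (EuclideanSpace ℝ (Fin n))) : Prop :=
  A.IsChamber E ∧ F ⊆ E ∧ A.sep D E = A.supp F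

/-- Flats: nonempty intersections of subfamilies of hyperplanes (including ℝⁿ itself). -/
def IsFlat (X : Set (EuclideanSpace ℝ (Fin n))) : Prop :=
  X.Nonempty ∧ ∃ s : Set ι, X = ⋂ i ∈ s, A.hyperplane i

/-- A cell `⟨C, F⟩` of the Salvetti complex: a chamber `C` together with a face `F` of `C`. -/
structure Cell {n : ℕ} {ι : Type} (𝒜 : Arrangement n ι) where
  C : Set (EuclideanSpace ℝ (Fin n))
  F : Set (EuclideanSpace ℝ (Fin n))
  isChamber : 𝒜.IsChamber C
  isFace : 𝒜.IsFace F
  faceLe : F ⊆ C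

/-- The Salvetti order: `⟨C,F⟩ ≤ ⟨D,G⟩` iff `F ⪯ G` (i.e. `F ⊇ G`) and `D.F = C`. -/
def cellLE (c d : A.Cell) : Prop := d.F ⊆ c.F ∧ A.IsCF d.C c.F c.C

/-- The subcomplex `S(C)`: cells `⟨D,F⟩` with `D = C.F`. -/
def inS (C : Set (EuclideanSpace ℝ (Fin n))) (c : A.Cell) : Prop := A.IsCF C c.F c.C

/-- A strict total order on the chambers. -/
def IsChamberOrder (lt : Set (EuclideanSpace ℝ (Fin n)) → Set (EuclideanSpace ℝ (Fin n)) → Prop) :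
    Prop :=
  (∀ C C', A.IsChamber C → A.IsChamber C' → C ≠ C' → lt C C' ∨ lt C' C) ∧
  (∀ C, ¬ lt C C) ∧
  (∀ C C' C'', lt C C' → lt C' C'' → lt C C'')

/-- The upper ideal `J(C)` of the poset of flats determined by a total order on chambers. -/
def J (lt : Set (EuclideanSpace ℝ (Fin n)) → Set (EuclideanSpace ℝ (Fin n)) → Prop)
    (C : Set (EuclideanSpace ℝ (Fin n))) : Set (Set (EuclideanSpace ℝ (Fin n))) :=
  {X | A.IsFlat X ∧ ∀ C', A.IsChamber C' → lt C' C → (A.supp X ∩ A.sep C C').Nonempty}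

/-- A valid order: for each chamber `C`, the ideal `J(C)` is the principal upper ideal
(in the poset of flats ordered by reverse inclusion) generated by `X_C = |F_C|` for some
face `F_C` of `C`. -/
def IsValidOrder
    (lt : Set (EuclideanSpace ℝ (Fin n)) → Set (EuclideanSpace ℝ (Fin n)) → Prop) : Prop :=
  A.IsChamberOrder lt ∧
  ∀ C, A.IsChamber C → ∃ F_C, A.IsFaceOf F_C C ∧
    A.J lt C = {X | A.IsFlat X ∧ X ⊆ (affineSpan ℝ F_C : Set (EuclideanSpace ℝ (Fin n)))}

/-- Membership in `N(C)`: cells of `S(C)` not lying in any earlier `S(C')`. -/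
def inN (lt : Set (EuclideanSpace ℝ (Fin n)) → Set (EuclideanSpace ℝ (Fin n)) → Prop)
    (C : Set (EuclideanSpace ℝ (Fin n))) (c : A.Cell) : Prop :=
  A.inS C c ∧ ∀ C', A.IsChamber C' → lt C' C → ¬ A.inS C' c

/-- A point `x₀` is generic with respect to `A`: (i) chambers at equal distance from `x₀`
have the same metric projection of `x₀`, lying in their intersection; (ii) distances to
strictly comparable flats are strictly comparable. -/
def IsGeneric (x₀ : EuclideanSpace ℝ (Fin n)) : Prop :=
  (∀ C C', A.IsChamber C → A.IsChamber C' → infDist x₀ C = infDist x₀ C' →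
    ∀ p ∈ C, ∀ p' ∈ C', (∀ q ∈ C, dist x₀ p ≤ dist x₀ q) →
      (∀ q ∈ C', dist x₀ p' ≤ dist x₀ q) → p = p' ∧ p ∈ C ∩ C') ∧
  (∀ L L', A.IsFlat L → A.IsFlat L' → L' ⊂ L → infDist x₀ L < infDist x₀ L')

end Arrangement

/-- The subarrangement of `A` indexed by a subset `s ⊆ ι`. -/
def Arrangement.restrict {n : ℕ} {ι : Type} (A : Arrangement n ι) (s : Set ι) :
    Arrangement n s where
  a i := A.a i
  b i := A.b i
  ha i := A.ha i
  inj i j h := Subtype.ext (A.inj h)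
  locFin x := by
    obtain ⟨ε, hε, hfin⟩ := A.locFin x
    refine ⟨ε, hε, ?_⟩
    have : {i : s | ∃ y ∈ Metric.ball x ε, (inner ℝ (A.a i) y : ℝ) = A.b i} ⊆
        Subtype.val ⁻¹' {i : ι | ∃ y ∈ Metric.ball x ε, (inner ℝ (A.a i) y : ℝ) = A.b i} :=
      fun i hi => hi
    exact (hfin.preimage Subtype.val_injective.injOn).subset this

/-
Every point `p` of a chamber of `A.restrict s` lies in a chamber of `A` contained in it: only
finitely many hyperplanes meet a small ball around `p`, so only finitely many sign vectors of `A`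
occur there, while points off all hyperplanes of `A` are dense in the open cell whose closure is
the chamber. A nearest point `p` to `x₀` in a chamber of `A.restrict s` is then also a nearest
point in such a chamber of `A`, at the same distance, so condition (i) for `A` applies.
Condition (ii) transfers because flats of `A.restrict s` are flats of `A`.
-/

theorem IsPreconnected.sign_eq {X : Type*} [TopologicalSpace X] {S : Set X} {f : X → ℝ}
    (hS : IsPreconnected S) (hf : ContinuousOn f S) (h0 : ∀ x ∈ S, f x ≠ 0) {x y : X}
    (hx : x ∈ S) (hy : y ∈ S) : SignType.sign (f x) = SignType.sign (f y) := by
  have no_sign_change : ∀ {a b}, a ∈ S → b ∈ S → f a < 0 → 0 < f b → False :=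
    fun ha hb hfa hfb =>
      let ⟨w, hw, hw0⟩ := hS.intermediate_value ha hb hf ⟨hfa.le, hfb.le⟩
      h0 w hw hw0
  rcases (h0 x hx).lt_or_gt with hfx | hfx <;> rcases (h0 y hy).lt_or_gt with hfy | hfy
  · rw [sign_neg hfx, sign_neg hfy]
  · exact (no_sign_change hx hy hfx hfy).elim
  · exact (no_sign_change hy hx hfy hfx).elim
  · rw [sign_pos hfx, sign_pos hfy]

theorem Metric.infDist_eq_dist_of_forall_dist_le {α : Type*} [PseudoMetricSpace α] {s : Set α}
    {x p : α} (hp : p ∈ s) (h : ∀ q ∈ s, dist x p ≤ dist x q) : infDist x s = dist x p :=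
  (infDist_le_dist_of_mem hp).antisymm <| not_lt.1 fun hlt =>
    let ⟨q, hq, hxq⟩ := (infDist_lt_iff ⟨p, hp⟩).1 hlt
    (h q hq).not_gt hxq

namespace Arrangement

variable {n : ℕ} {ι : Type} (A : Arrangement n ι)

theorem continuous_val (i : ι) : Continuous (A.val i) :=
  (continuous_const.inner continuous_id).sub continuous_const

theorem isClosed_hyperplane (i : ι) : IsClosed (A.hyperplane i) :=
  isClosed_eq (A.continuous_val i) continuous_const

theorem interior_hyperplane (i : ι) : interior (A.hyperplane i) = ∅ := by
  set f := innerSL ℝ (A.a i)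
  have hf : f ≠ 0 := by
    rw [← norm_ne_zero_iff, innerSL_apply_norm, norm_ne_zero_iff]
    exact A.ha i
  have hH : A.hyperplane i = f ⁻¹' {A.b i} := by
    ext x
    simp [f, hyperplane, val, sub_eq_zero]
  refine eq_empty_of_forall_notMem fun x hx => not_isOpen_singleton (A.b i) ?_
  have himage : f '' interior (A.hyperplane i) = {A.b i} :=
    (Set.Nonempty.image f ⟨x, hx⟩).subset_singleton_iff.1 <| by
      rw [image_subset_iff, ← hH]
      exact interior_subset
  exact himage ▸ f.isOpenMap_of_ne_zero hf _ isOpen_interior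

theorem dense_compl_hyperplane (i : ι) : Dense (A.hyperplane i)ᶜ :=
  interior_eq_empty_iff_dense_compl.1 (A.interior_hyperplane i)

theorem exists_ball_val_ne_zero (x : EuclideanSpace ℝ (Fin n)) :
    ∃ ε > 0, ∃ I : Set ι, I.Finite ∧ ∀ i ∉ I, ∀ y ∈ ball x ε, A.val i y ≠ 0 := by
  obtain ⟨ε, hε, hfin⟩ := A.locFin x
  exact ⟨ε, hε, _, hfin, fun i hi y hy hy0 => hi ⟨y, hy, sub_eq_zero.1 hy0⟩⟩

theorem sign_val_eq_of_mem_ball {i : ι} {x y : EuclideanSpace ℝ (Fin n)} {ε : ℝ}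
    (h : ∀ z ∈ ball x ε, A.val i z ≠ 0) (hy : y ∈ ball x ε) :
    SignType.sign (A.val i y) = SignType.sign (A.val i x) :=
  (convex_ball x ε).isPreconnected.sign_eq (A.continuous_val i).continuousOn h hy
    (mem_ball_self (pos_of_mem_ball hy))

theorem dense_setOf_forall_val_ne_zero : Dense {z | ∀ i, A.val i z ≠ 0} := by
  refine dense_iff_inter_open.2 fun O hO ⟨y, hy⟩ => ?_
  obtain ⟨ε, hε, I, hI, hval⟩ := A.exists_ball_val_ne_zero y
  have hdense : Dense (⋂ i ∈ I, (A.hyperplane i)ᶜ) :=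
    dense_biInter_of_isOpen (fun i _ => (A.isClosed_hyperplane i).isOpen_compl) hI.countable
      fun i _ => A.dense_compl_hyperplane i
  obtain ⟨z, ⟨hzO, hzε⟩, hzI⟩ :=
    hdense.inter_open_nonempty _ (hO.inter isOpen_ball) ⟨y, hy, mem_ball_self hε⟩
  refine ⟨z, hzO, fun i => ?_⟩
  by_cases hi : i ∈ I
  · exact mem_iInter₂.1 hzI i hi
  · exact hval i hi z hzε

theorem isOpen_setOf_sign_val_eq (i : ι) {σ : SignType} (hσ : σ ≠ 0) :
    IsOpen {z | SignType.sign (A.val i z) = σ} := by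
  rcases σ with _ | _ | _
  · exact absurd rfl hσ
  · simpa only [SignType.neg_eq_neg_one, sign_eq_neg_one_iff] using
      isOpen_lt (A.continuous_val i) continuous_const
  · simpa only [SignType.pos_eq_one, sign_eq_one_iff] using
      isOpen_lt continuous_const (A.continuous_val i)

theorem isOpen_openCell_signAt {x : EuclideanSpace ℝ (Fin n)} (hx : ∀ i, A.val i x ≠ 0) :
    IsOpen (A.openCell (A.signAt x)) := by
  refine isOpen_iff_mem_nhds.2 fun y hy => ?_
  obtain ⟨ε, hε, I, hI, hval⟩ := A.exists_ball_val_ne_zero y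
  refine Filter.mem_of_superset (Filter.inter_mem (ball_mem_nhds y hε) ((Filter.biInter_mem hI).2
    fun i _ => (A.isOpen_setOf_sign_val_eq i (sign_ne_zero.2 (hx i))).mem_nhds (hy i)))
    fun z ⟨hzε, hzI⟩ i => ?_
  by_cases hi : i ∈ I
  · exact mem_iInter₂.1 hzI i hi
  · exact (A.sign_val_eq_of_mem_ball (hval i hi) hzε).trans (hy i)

theorem exists_ball_finite_signAt_image (x : EuclideanSpace ℝ (Fin n)) :
    ∃ ε > 0, (A.signAt '' ball x ε).Finite := by
  obtain ⟨ε, hε, I, hI, hval⟩ := A.exists_ball_val_ne_zero x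
  refine ⟨ε, hε, ?_⟩
  have : Finite I := hI.to_subtype
  refine Set.Finite.of_finite_image (f := fun σ (i : I) => σ i) (Set.toFinite _) ?_
  rintro _ ⟨y, hy, rfl⟩ _ ⟨z, hz, rfl⟩ hyz
  funext i
  by_cases hi : i ∈ I
  · exact congrFun hyz ⟨i, hi⟩
  · exact (A.sign_val_eq_of_mem_ball (hval i hi) hy).trans
      (A.sign_val_eq_of_mem_ball (hval i hi) hz).symm

theorem exists_mem_closure_openCell_signAt {W : Set (EuclideanSpace ℝ (Fin n))}
    {p : EuclideanSpace ℝ (Fin n)} (hp : p ∈ closure W) :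
    ∃ z ∈ W, p ∈ closure (A.openCell (A.signAt z)) := by
  obtain ⟨ε, hε, hfin⟩ := A.exists_ball_finite_signAt_image p
  have hcover : ball p ε ∩ W ⊆ ⋃ σ ∈ A.signAt '' (ball p ε ∩ W), A.openCell σ :=
    fun z hz => mem_biUnion (mem_image_of_mem _ hz) fun _ => rfl
  have hpε : p ∈ closure (ball p ε ∩ W) :=
    isOpen_ball.inter_closure ⟨mem_ball_self hε, hp⟩
  have hpcover := closure_mono hcover hpε
  rw [(hfin.subset (image_mono inter_subset_left)).closure_biUnion] at hpcover
  obtain ⟨_, ⟨z, ⟨-, hzW⟩, rfl⟩, hpz⟩ := mem_iUnion₂.1 hpcover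
  exact ⟨z, hzW, hpz⟩

theorem exists_isChamber_subset_of_isChamber_restrict {s : Set ι}
    {C : Set (EuclideanSpace ℝ (Fin n))} (hC : (A.restrict s).IsChamber C)
    {p : EuclideanSpace ℝ (Fin n)} (hp : p ∈ C) :
    ∃ D, A.IsChamber D ∧ p ∈ D ∧ D ⊆ C := by
  obtain ⟨x, hx, rfl⟩ := hC
  have hU := (A.restrict s).isOpen_openCell_signAt hx
  obtain ⟨z, ⟨hzU, hz⟩, hpz⟩ := A.exists_mem_closure_openCell_signAt <|
    closure_minimal (A.dense_setOf_forall_val_ne_zero.open_subset_closure_inter hU)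
      isClosed_closure hp
  exact ⟨_, ⟨z, hz, rfl⟩, hpz, closure_mono fun w hw j => (hw j).trans (hzU j)⟩

theorem isFlat_of_isFlat_restrict {s : Set ι} {X : Set (EuclideanSpace ℝ (Fin n))}
    (hX : (A.restrict s).IsFlat X) : A.IsFlat X := by
  obtain ⟨hne, t, rfl⟩ := hX
  refine ⟨hne, Subtype.val '' t, ?_⟩
  rw [biInter_image]
  rfl

end Arrangement

/-- A point generic with respect to `A` is generic with respect to every subarrangement. -/
theorem stmt14 {n : ℕ} {ι : Type} (A : Arrangement n ι)
    (x₀ : EuclideanSpace ℝ (Fin n)) (h : A.IsGeneric x₀) (s : Set ι) :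
    (A.restrict s).IsGeneric x₀ := by
  refine ⟨fun C C' hC hC' hCC' p hp p' hp' hmin hmin' => ?_, fun L L' hL hL' hLL' =>
    h.2 L L' (A.isFlat_of_isFlat_restrict hL) (A.isFlat_of_isFlat_restrict hL') hLL'⟩
  obtain ⟨D, hD, hpD, hDC⟩ := A.exists_isChamber_subset_of_isChamber_restrict hC hp
  obtain ⟨D', hD', hpD', hDC'⟩ := A.exists_isChamber_subset_of_isChamber_restrict hC' hp'
  have hminD : ∀ q ∈ D, dist x₀ p ≤ dist x₀ q := fun q hq => hmin q (hDC hq)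
  have hminD' : ∀ q ∈ D', dist x₀ p' ≤ dist x₀ q := fun q hq => hmin' q (hDC' hq)
  have hDD' : infDist x₀ D = infDist x₀ D' := by
    rw [infDist_eq_dist_of_forall_dist_le hpD hminD,
      infDist_eq_dist_of_forall_dist_le hpD' hminD',
      ← infDist_eq_dist_of_forall_dist_le hp hmin,
      ← infDist_eq_dist_of_forall_dist_le hp' hmin', hCC']
  obtain ⟨rfl, -⟩ := h.1 D D' hD hD' hDD' p hpD p' hpD' hminD hminD'
  exact ⟨rfl, hp, hp'⟩
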